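/- Let ≥ be a transitive, crown-free binary relation on a set A. Then for any weak cycle (a₁,…,a_K) with K ≥ 4 in ≥, there exists an index k with 1 < k < K such that (a₁, a_k, a_K) is a weak cycle. -/
import Mathlib


variable {A : Type*}

/-- A `K`-crown (K ≥ 4 even) for the relation `le`, indexed `1,…,K`, cyclically. -/
def IsCrown (le : A → A → Prop) (K : ℕ) (a : ℕ → A) : Prop :=
  4 ≤ K ∧ Even K ∧
  (∀ k k', 1 ≤ k → k + 2 ≤ k' → k' ≤ K → ¬(k = 1 ∧ k' = K) →
    ¬ le (a k) (a k') ∧ ¬ le (a k') (a k)) ∧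
  (∀ k, 1 < k → k ≤ K → Even k →
    (le (a k) (a (k - 1)) ∧ ¬ le (a (k - 1)) (a k)) ∧
    (le (a k) (a (if k = K then 1 else k + 1)) ∧
      ¬ le (a (if k = K then 1 else k + 1)) (a k)))

/-- `le` contains no crowns. -/
def CrownFree (le : A → A → Prop) : Prop := ¬ ∃ K a, IsCrown le K a

/-- A weak cycle of length `K` in `r`, indexed `1,…,K` with `a (K+1) = a 1`:
distinct elements, cyclically adjacent elements comparable. -/
def WeakCycleIdx (r : A → A → Prop) (K : ℕ) (a : ℕ → A) : Prop :=
  (∀ i j, 1 ≤ i → i ≤ K → 1 ≤ j → j ≤ K → a i = a j → i = j) ∧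
  (∀ k, 1 ≤ k → k < K → (r (a k) (a (k + 1)) ∨ r (a (k + 1)) (a k))) ∧
  (r (a K) (a 1) ∨ r (a 1) (a K))

set_option maxHeartbeats 1000000 in
theorem weak_cycle_shortcut_aux (r : A → A → Prop) (htrans : Transitive r)
    (hcf : CrownFree (fun x y => r y x)) :
    ∀ K, 4 ≤ K → ∀ a : ℕ → A, WeakCycleIdx r K a →
      ∃ k, 1 < k ∧ k < K ∧ (r (a 1) (a k) ∨ r (a k) (a 1)) ∧
        (r (a k) (a K) ∨ r (a K) (a k)) := by
  intro K
  induction K using Nat.strong_induction_on with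
  | _ K ih =>
  intro hK a hcyc
  obtain ⟨hinj, hedge, hwrap⟩ := hcyc
  by_cases hch : ∃ i j, 1 ≤ i ∧ i + 2 ≤ j ∧ j ≤ K ∧ ¬(i = 1 ∧ j = K) ∧
      (r (a i) (a j) ∨ r (a j) (a i))
  · obtain ⟨i, j, hi, hij, hjK, hne, hcomp⟩ := hch
    by_cases hc1 : i = 1 ∧ j = K - 1
    · obtain ⟨rfl, rfl⟩ := hc1
      refine ⟨K - 1, by omega, by omega, hcomp, ?_⟩
      have h := hedge (K - 1) (by omega) (by omega)
      rwa [show K - 1 + 1 = K by omega] at h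
    by_cases hc2 : i = 2 ∧ j = K
    · obtain ⟨rfl, rfl⟩ := hc2
      exact ⟨2, by omega, by omega, hedge 1 (by omega) (by omega), hcomp⟩
    -- shorten the cycle using the chord
    set d := j - i - 1 with hd
    set K' := i + (K - j) + 1 with hK'
    have hdK : K' + d = K := by omega
    have hK'4 : 4 ≤ K' := by omega
    have hK'lt : K' < K := by omega
    set b : ℕ → A := fun m => if m ≤ i then a m else a (m + d) with hb
    have hb1 : b 1 = a 1 := by simp only [hb]; rw [if_pos hi]
    have hbK : b K' = a K := by
      simp only [hb]; rw [if_neg (by omega), hdK]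
    have hbcyc : WeakCycleIdx r K' b := by
      refine ⟨?_, ?_, ?_⟩
      · intro p q hp hpK' hq hqK' heq
        simp only [hb] at heq
        by_cases hpi : p ≤ i <;> by_cases hqi : q ≤ i
        · rw [if_pos hpi, if_pos hqi] at heq
          exact hinj p q hp (by omega) hq (by omega) heq
        · rw [if_pos hpi, if_neg hqi] at heq
          have := hinj p (q + d) hp (by omega) (by omega) (by omega) heq
          omega
        · rw [if_neg hpi, if_pos hqi] at heq
          have := hinj (p + d) q (by omega) (by omega) hq (by omega) heq
          omega
        · rw [if_neg hpi, if_neg hqi] at heq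
          have := hinj (p + d) (q + d) (by omega) (by omega) (by omega) (by omega) heq
          omega
      · intro m hm hmK'
        simp only [hb]
        by_cases hm1 : m + 1 ≤ i
        · rw [if_pos (by omega), if_pos hm1]
          exact hedge m hm (by omega)
        by_cases hmi : m ≤ i
        · rw [if_pos hmi, if_neg hm1]
          have he : m = i := by omega
          have he2 : i + 1 + d = j := by omega
          rw [he, he2]
          exact hcomp
        · rw [if_neg hmi, if_neg (by omega)]
          have h := hedge (m + d) (by omega) (by omega)
          rwa [show m + d + 1 = m + 1 + d by omega] at h
      · rw [hb1, hbK]; exact hwrap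
    obtain ⟨k', hk'1, hk'K', hcA, hcB⟩ := ih K' hK'lt hK'4 b hbcyc
    rw [hb1] at hcA
    rw [hbK] at hcB
    by_cases hki : k' ≤ i
    · have hbk : b k' = a k' := by simp only [hb]; rw [if_pos hki]
      rw [hbk] at hcA hcB
      exact ⟨k', hk'1, by omega, hcA, hcB⟩
    · have hbk : b k' = a (k' + d) := by simp only [hb]; rw [if_neg hki]
      rw [hbk] at hcA hcB
      exact ⟨k' + d, by omega, by omega, hcA, hcB⟩
  · -- chordless case: build a crown, contradiction
    exfalso
    have hnc : ∀ i j, 1 ≤ i → i + 2 ≤ j → j ≤ K → ¬(i = 1 ∧ j = K) →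
        ¬ r (a i) (a j) ∧ ¬ r (a j) (a i) := by
      intro i j h1 h2 h3 h4
      exact ⟨fun h => hch ⟨i, j, h1, h2, h3, h4, Or.inl h⟩,
             fun h => hch ⟨i, j, h1, h2, h3, h4, Or.inr h⟩⟩
    obtain ⟨M, rfl⟩ : ∃ M, K = M + 1 := ⟨K - 1, by omega⟩
    have hM : 3 ≤ M := by omega
    have hstrict : ∀ k, 1 ≤ k → k ≤ M → ¬(r (a k) (a (k + 1)) ∧ r (a (k + 1)) (a k)) := by
      rintro k hk hkM ⟨h1, h2⟩
      rcases Nat.lt_or_ge k M with hlt | hge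
      · rcases hedge (k + 1) (by omega) (by omega) with h3 | h3
        · exact (hnc k (k + 2) hk le_rfl (by omega) (by omega)).1 (htrans h1 h3)
        · exact (hnc k (k + 2) hk le_rfl (by omega) (by omega)).2 (htrans h3 h2)
      · have hkM' : k = M := by omega
        subst hkM'
        rcases hwrap with h3 | h3
        · exact (hnc 1 k (by omega) (by omega) (by omega) (by omega)).2 (htrans h1 h3)
        · exact (hnc 1 k (by omega) (by omega) (by omega) (by omega)).1 (htrans h3 h2)
    have hstrictw : ¬(r (a (M + 1)) (a 1) ∧ r (a 1) (a (M + 1))) := by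
      rintro ⟨h1, h2⟩
      have he : r (a 1) (a 2) ∨ r (a 2) (a 1) := hedge 1 (by omega) (by omega)
      rcases he with h3 | h3
      · exact (hnc 2 (M + 1) (by omega) (by omega) (by omega) (by omega)).2 (htrans h1 h3)
      · exact (hnc 2 (M + 1) (by omega) (by omega) (by omega) (by omega)).1 (htrans h3 h2)
    have halt : ∀ k, 1 ≤ k → k + 1 ≤ M →
        (r (a k) (a (k + 1)) ↔ r (a (k + 2)) (a (k + 1))) := by
      intro k hk hk1
      constructor
      · intro h
        rcases hedge (k + 1) (by omega) (by omega) with h3 | h3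
        · exact absurd (htrans h h3) (hnc k (k + 2) hk le_rfl (by omega) (by omega)).1
        · exact h3
      · intro h
        rcases hedge k (by omega) (by omega) with h3 | h3
        · exact h3
        · exact absurd (htrans h h3) (hnc k (k + 2) hk le_rfl (by omega) (by omega)).2
    have hpar : ∀ k, 1 ≤ k → k ≤ M →
        (r (a k) (a (k + 1)) ↔ (Odd k ↔ r (a 1) (a 2))) := by
      intro k hk
      induction k, hk using Nat.le_induction with
      | base =>
        intro _
        simp [Nat.odd_iff]
      | succ n hn ihn =>
        intro hn1
        have h1 := ihn (by omega)
        have h2 := halt n hn (by omega)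
        have h3 := hstrict (n + 1) (by omega) (by omega)
        have h4 := hedge (n + 1) (by omega) (by omega)
        have h5 : Odd (n + 1) ↔ ¬ Odd n := by
          simp only [Nat.odd_iff]; omega
        simp only [show n + 1 + 1 = n + 2 from by omega] at h2 h3 h4 ⊢
        tauto
    have hW1 : r (a (M + 1)) (a 1) ↔ r (a 2) (a 1) := by
      constructor
      · intro h
        have he : r (a 1) (a 2) ∨ r (a 2) (a 1) := hedge 1 (by omega) (by omega)
        rcases he with h3 | h3
        · exact absurd (htrans h h3)
            (hnc 2 (M + 1) (by omega) (by omega) (by omega) (by omega)).2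
        · exact h3
      · intro h
        rcases hwrap with h3 | h3
        · exact h3
        · exact absurd (htrans h h3)
            (hnc 2 (M + 1) (by omega) (by omega) (by omega) (by omega)).1
    have hWK : r (a (M + 1)) (a 1) ↔ r (a (M + 1)) (a M) := by
      constructor
      · intro h
        rcases hedge M (by omega) (by omega) with h3 | h3
        · exact absurd (htrans h3 h) (hnc 1 M (by omega) (by omega) (by omega) (by omega)).2
        · exact h3
      · intro h
        rcases hwrap with h3 | h3
        · exact h3
        · exact absurd (htrans h3 h) (hnc 1 M (by omega) (by omega) (by omega) (by omega)).1
    have hOddM : Odd M := by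
      have hpM := hpar M (by omega) le_rfl
      have h4 : r (a M) (a (M + 1)) ∨ r (a (M + 1)) (a M) := hedge M (by omega) (by omega)
      have h3 : ¬(r (a M) (a (M + 1)) ∧ r (a (M + 1)) (a M)) := hstrict M (by omega) le_rfl
      have h1 : r (a 1) (a 2) ∨ r (a 2) (a 1) := hedge 1 (by omega) (by omega)
      have h0 : ¬(r (a 1) (a 2) ∧ r (a 2) (a 1)) := hstrict 1 (by omega) (by omega)
      by_contra hodd
      tauto
    have hEvenK : Even (M + 1) := by
      rcases hOddM with ⟨t, ht⟩; exact ⟨t + 1, by omega⟩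
    by_cases hE1 : r (a 1) (a 2)
    · -- a itself is a crown
      apply hcf
      refine ⟨M + 1, a, by omega, hEvenK, ?_, ?_⟩
      · intro k k' h1 h2 h3 h4
        exact ⟨(hnc k k' h1 h2 h3 h4).2, (hnc k k' h1 h2 h3 h4).1⟩
      · intro k hk1 hkK hke
        obtain ⟨p, rfl⟩ : ∃ p, k = p + 1 := ⟨k - 1, by omega⟩
        simp only [Nat.add_sub_cancel]
        have hp1 : 1 ≤ p := by omega
        have hpM : p ≤ M := by omega
        have hpodd : Odd p := by
          rcases hke with ⟨t, ht⟩; exact ⟨t - 1, by omega⟩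
        have hEp : r (a p) (a (p + 1)) :=
          (hpar p hp1 hpM).2 ⟨fun _ => hE1, fun _ => hpodd⟩
        have hstr := hstrict p hp1 hpM
        refine ⟨⟨hEp, fun hcon => hstr ⟨hEp, hcon⟩⟩, ?_⟩
        by_cases hik : p + 1 = M + 1
        · rw [if_pos hik]
          have hpM' : p = M := by omega
          subst hpM'
          have hnW : ¬ r (a (p + 1)) (a 1) := by
            intro hw
            exact hstrict p hp1 hpM ⟨hEp, hWK.1 hw⟩
          exact ⟨hwrap.resolve_left hnW, hnW⟩
        · rw [if_neg hik]
          have hEp1 : ¬ r (a (p + 1)) (a (p + 1 + 1)) := by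
            intro hcon
            have h6 := ((hpar (p + 1) (by omega) (by omega)).1 hcon).2 hE1
            rcases h6 with ⟨t, ht⟩; rcases hpodd with ⟨s, hs⟩; omega
          have hcomp' := (hedge (p + 1) (by omega) (by omega)).resolve_left hEp1
          exact ⟨hcomp', hEp1⟩
    · -- the rotated cycle is a crown
      have hEMfalse : ¬ r (a M) (a (M + 1)) := fun h =>
        hE1 (((hpar M (by omega) le_rfl).1 h).1 hOddM)
      have hW : r (a (M + 1)) (a 1) :=
        hWK.2 ((hedge M (by omega) (by omega)).resolve_left hEMfalse)
      have hWnot : ¬ r (a 1) (a (M + 1)) := fun h => hstrictw ⟨hW, h⟩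
      have hE1' : r (a 2) (a 1) :=
        (show r (a 1) (a 2) ∨ r (a 2) (a 1) from hedge 1 (by omega) (by omega)).resolve_left hE1
      set c : ℕ → A := fun m => if m = M + 1 then a 1 else a (m + 1) with hc
      have hcMK : c (M + 1) = a 1 := by simp [hc]
      have hclt : ∀ m, m ≠ M + 1 → c m = a (m + 1) := by
        intro m hm; simp only [hc]; rw [if_neg hm]
      apply hcf
      refine ⟨M + 1, c, by omega, hEvenK, ?_, ?_⟩
      · intro k k' h1 h2 h3 h4
        rw [hclt k (by omega)]
        by_cases hk' : k' = M + 1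
        · rw [hk', hcMK]
          have h5 := hnc 1 (k + 1) (by omega) (by omega) (by omega) (by omega)
          exact ⟨h5.1, h5.2⟩
        · rw [hclt k' hk']
          have h5 := hnc (k + 1) (k' + 1) (by omega) (by omega) (by omega) (by omega)
          exact ⟨h5.2, h5.1⟩
      · intro k hk1 hkK hke
        by_cases hkeq : k = M + 1
        · subst hkeq
          rw [if_pos rfl, show M + 1 - 1 = M from by omega, hcMK,
            hclt M (by omega), hclt 1 (by omega)]
          exact ⟨⟨hW, hWnot⟩, hE1', hE1⟩
        · rw [if_neg hkeq]
          obtain ⟨p, rfl⟩ : ∃ p, k = p + 1 := ⟨k - 1, by omega⟩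
          have hpodd : Odd p := by
            rcases hke with ⟨t, ht⟩; exact ⟨t - 1, by omega⟩
          have hp1M : p + 1 ≤ M := by omega
          have hp2M : p + 2 ≤ M := by
            rcases hOddM with ⟨t, ht⟩; rcases hpodd with ⟨s, hs⟩; omega
          rw [show p + 1 - 1 = p from by omega, hclt p (by omega),
            hclt (p + 1) (by omega), hclt (p + 1 + 1) (by omega)]
          have hEp1 : r (a (p + 1)) (a (p + 1 + 1)) := by
            refine (hpar (p + 1) (by omega) hp1M).2 (iff_of_false ?_ hE1)
            rintro ⟨t, ht⟩; rcases hpodd with ⟨s, hs⟩; omega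
          have hstrict1 := hstrict (p + 1) (by omega) hp1M
          have hoP2 : Odd (p + 2) := by
            rcases hpodd with ⟨s, hs⟩; exact ⟨s + 1, by omega⟩
          have hnE : ¬ r (a (p + 2)) (a (p + 2 + 1)) :=
            fun h => hE1 (((hpar (p + 2) (by omega) hp2M).1 h).1 hoP2)
          have hEp2' := (hedge (p + 2) (by omega) (by omega)).resolve_left hnE
          have hEp2 : r (a (p + 1 + 1 + 1)) (a (p + 1 + 1)) := by
            rwa [show p + 2 + 1 = p + 1 + 1 + 1 from by omega,
              show p + 2 = p + 1 + 1 from by omega] at hEp2'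
          have hstrict2 := hstrict (p + 1 + 1) (by omega) (by omega)
          exact ⟨⟨hEp1, fun h => hstrict1 ⟨hEp1, h⟩⟩,
                 hEp2, fun h => hstrict2 ⟨h, hEp2⟩⟩

/-- Shortcut observation: in a transitive, crown-free relation, every weak cycle of
length `K ≥ 4` has a three-element weak-cycle shortcut `(a 1, a k, a K)`. -/
theorem weak_cycle_shortcut (r : A → A → Prop) (htrans : Transitive r)
    (hcf : CrownFree (fun x y => r y x))
    (K : ℕ) (a : ℕ → A) (hK : 4 ≤ K) (hcyc : WeakCycleIdx r K a) :
    ∃ k, 1 < k ∧ k < K ∧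
      WeakCycleIdx r 3 (fun i => if i = 1 then a 1 else if i = 2 then a k else a K) := by
  obtain ⟨k, hk1, hkK, hc1, hc2⟩ := weak_cycle_shortcut_aux r htrans hcf K hK a hcyc
  obtain ⟨hinj, hedge, hwrap⟩ := hcyc
  refine ⟨k, hk1, hkK, ?_, ?_, ?_⟩
  · intro i j hi hi3 hj hj3 heq
    interval_cases i <;> interval_cases j
    · rfl
    · exact absurd (hinj 1 k (by omega) (by omega) (by omega) (by omega)
        (by simpa using heq)) (by omega)
    · exact absurd (hinj 1 K (by omega) (by omega) (by omega) (by omega)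
        (by simpa using heq)) (by omega)
    · exact absurd (hinj k 1 (by omega) (by omega) (by omega) (by omega)
        (by simpa using heq)) (by omega)
    · rfl
    · exact absurd (hinj k K (by omega) (by omega) (by omega) (by omega)
        (by simpa using heq)) (by omega)
    · exact absurd (hinj K 1 (by omega) (by omega) (by omega) (by omega)
        (by simpa using heq)) (by omega)
    · exact absurd (hinj K k (by omega) (by omega) (by omega) (by omega)
        (by simpa using heq)) (by omega)
    · rfl
  · intro m hm hm3
    interval_cases m
    · simpa using hc1
    · simpa using hc2
  · simpa using hwrap
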